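/- arXiv:2210.09426 — 7 statements merged into one kernel-verified Lean document; each statement's English description precedes it below -/
import Mathlib

section
/- Let uLL, aHH, re, D, E, dL, dH, dS be real numbers satisfying uLL < 0, aHH < 0, re > 0, D > 0, E < 0, dL + dH + dS = 0, uLL·dL = re·aHH·dH, and uLL·dL = D + E·dS. Then dS > 0. -/
/-- Lemma (Appendix B): the optimal amount of socializing is strictly increasing in the
unobserved preference for socializing. -/
theorem stmt_1 (uLL aHH re D E dL dH dS : ℝ)
    (huLL : uLL < 0) (haHH : aHH < 0) (hre : 0 < re) (hD : 0 < D) (hE : E < 0)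
    (hsum : dL + dH + dS = 0)
    (heq1 : uLL * dL = re * aHH * dH)
    (heq2 : uLL * dL = D + E * dS) :
    0 < dS := by
  by_contra h
  push_neg at h
  have h1 : 0 ≤ E * dS := by nlinarith
  have h2 : 0 < uLL * dL := by linarith
  have hdL : dL < 0 := by nlinarith
  have h3 : 0 < re * aHH * dH := by linarith
  have hra : re * aHH < 0 := mul_neg_of_pos_of_neg hre haHH
  have hdH : dH < 0 := by nlinarith
  linarith
end

section
/- Let uLL, aHH, re, A, B, C, dSj, dL, dH, dS be real numbers satisfying uLL < 0, aHH < 0, re > 0, A < 0, B < 0, C > 0, dSj ≤ 0, dL + dH + dS = 0, uLL·dL = re·aHH·dH, and uLL·dL = A + B·dS + C·dSj. Then dS < 0, dH > 0, and dL > 0. -/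
/-- Proposition 3 (homophily), first part: if the peer's socializing does not increase with
social distance (`dSj ≤ 0`), then an increase in social distance leads the individual to
socialize strictly less, study strictly more, and take strictly more leisure. -/
theorem stmt_2 (uLL aHH re A B C dSj dL dH dS : ℝ)
    (huLL : uLL < 0) (haHH : aHH < 0) (hre : 0 < re)
    (hA : A < 0) (hB : B < 0) (hC : 0 < C) (hdSj : dSj ≤ 0)
    (hsum : dL + dH + dS = 0)
    (heq1 : uLL * dL = re * aHH * dH)
    (heq2 : uLL * dL = A + B * dS + C * dSj) :
    dS < 0 ∧ 0 < dH ∧ 0 < dL := by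
  have hra : re * aHH < 0 := mul_neg_of_pos_of_neg hre haHH
  have hdS : dS < 0 := by
    by_contra h
    push_neg at h
    have h1 : uLL * dL < 0 := by
      nlinarith [mul_nonpos_of_nonpos_of_nonneg hB.le h,
        mul_nonpos_of_nonneg_of_nonpos hC.le hdSj]
    have hdL : 0 < dL := by nlinarith
    have hdH : 0 < dH := by nlinarith
    linarith
  have hdL : 0 < dL := by
    by_contra h
    push_neg at h
    have h1 : 0 ≤ uLL * dL := by nlinarith
    have hdH : dH ≤ 0 := by nlinarith
    linarith
  have hdH : 0 < dH := by nlinarith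
  exact ⟨hdS, hdH, hdL⟩
end

section
/- Let uLL, aHH, re, A', B, dL, dH, dS be real numbers satisfying uLL < 0, aHH < 0, re > 0, B < 0, A' ≠ 0, dL + dH + dS = 0, uLL·dL = re·aHH·dH, and uLL·dL = A' + B·dS. Then dS ≠ 0 and dH ≠ 0. -/
/-- Proposition 3 (homophily), second part: a change in social distance has a nonzero effect
on both socializing and studying. -/
theorem stmt_3 (uLL aHH re A' B dL dH dS : ℝ)
    (huLL : uLL < 0) (haHH : aHH < 0) (hre : 0 < re)
    (hB : B < 0) (hA' : A' ≠ 0)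
    (hsum : dL + dH + dS = 0)
    (heq1 : uLL * dL = re * aHH * dH)
    (heq2 : uLL * dL = A' + B * dS) :
    dS ≠ 0 ∧ dH ≠ 0 := by
  constructor
  · intro h
    subst h
    have hL : dL = -dH := by linarith
    have : dH * (re * aHH + uLL) = 0 := by nlinarith [heq1]
    have hne : re * aHH + uLL ≠ 0 := by nlinarith
    have hH : dH = 0 := by
      rcases mul_eq_zero.mp this with h | h
      · exact h
      · exact absurd h hne
    apply hA'
    nlinarith [heq2]
  · intro h
    subst h
    have hL : dL = 0 := by
      have := heq1
      simp at this
      rcases this with h | h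
      · exact absurd h (ne_of_lt huLL)
      · exact h
    apply hA'
    have hS : dS = 0 := by linarith
    rw [hL, hS] at heq2
    linarith
end

section
/- Let uLL, aHH, re, M, N, E, dL, dH, dS be real numbers satisfying uLL < 0, aHH < 0, re > 0, M > 0, N ≤ 0, E < 0, dL + dH + dS = 0, uLL·dL = M + re·aHH·dH, and uLL·dL = N + E·dS. Then dH > 0 and dS < 0. -/
/-- Proposition 4 (IQ case, under condition (MU.iq) `N ≤ 0`): smarter students study
strictly more and socialize strictly less. -/
theorem stmt_4 (uLL aHH re M N E dL dH dS : ℝ)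
    (huLL : uLL < 0) (haHH : aHH < 0) (hre : 0 < re)
    (hM : 0 < M) (hN : N ≤ 0) (hE : E < 0)
    (hsum : dL + dH + dS = 0)
    (heq1 : uLL * dL = M + re * aHH * dH)
    (heq2 : uLL * dL = N + E * dS) :
    0 < dH ∧ dS < 0 := by
  have hA : re * aHH < 0 := mul_neg_of_pos_of_neg hre haHH
  have hH : 0 < dH := by
    by_contra h
    push_neg at h
    have h1 : 0 < uLL * dL := by nlinarith
    have hdL : dL < 0 := by
      by_contra h'
      push_neg at h'
      nlinarith
    have hdS : 0 < dS := by linarith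
    nlinarith [mul_neg_of_neg_of_pos hE hdS]
  refine ⟨hH, ?_⟩
  by_contra h
  push_neg at h
  have h2 : uLL * dL ≤ 0 := by nlinarith [mul_nonpos_of_nonpos_of_nonneg hE.le h]
  have hdL : 0 ≤ dL := by
    by_contra h'
    push_neg at h'
    nlinarith
  linarith
end

section
/- Let uLL, aHH, re, M, N, E, dL, dH, dS be real numbers satisfying uLL < 0, aHH < 0, re > 0, 0 < N, N < M, E < 0, dL + dH + dS = 0, uLL·dL = M + re·aHH·dH, and uLL·dL = N + E·dS. Then dH > 0 and dL < 0. -/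
/-- Proposition 4 (intermediate IQ case, `0 < N < M`): smarter students study strictly
more and take strictly less leisure. -/
theorem stmt_5 (uLL aHH re M N E dL dH dS : ℝ)
    (huLL : uLL < 0) (haHH : aHH < 0) (hre : 0 < re)
    (hN : 0 < N) (hNM : N < M) (hE : E < 0)
    (hsum : dL + dH + dS = 0)
    (heq1 : uLL * dL = M + re * aHH * dH)
    (heq2 : uLL * dL = N + E * dS) :
    0 < dH ∧ dL < 0 := by
  have hB : re * aHH < 0 := mul_neg_of_pos_of_neg hre haHH
  have hdH : 0 < dH := by
    by_contra h
    push_neg at h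
    have h1 : M ≤ uLL * dL := by nlinarith
    have hdL : dL < 0 := by nlinarith
    have hdS : 0 < dS := by nlinarith
    nlinarith
  refine ⟨hdH, ?_⟩
  by_contra h
  push_neg at h
  have h2 : uLL * dL ≤ 0 := mul_nonpos_of_nonpos_of_nonneg huLL.le h
  have hdS : 0 < dS := by nlinarith
  nlinarith
end

section
/- Let uLL, aHH, re, M, N, E, dL, dH, dS be real numbers satisfying uLL < 0, aHH < 0, re > 0, M > 0, N > M, E < 0, dL + dH + dS = 0, uLL·dL = M + re·aHH·dH, and uLL·dL = N + E·dS. Then dS > 0 and dL < 0. -/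
/-- Proposition 4 (third IQ case, `N > M`): smarter students socialize strictly more and
take strictly less leisure. -/
theorem stmt_6 (uLL aHH re M N E dL dH dS : ℝ)
    (huLL : uLL < 0) (haHH : aHH < 0) (hre : 0 < re)
    (hM : 0 < M) (hNM : M < N) (hE : E < 0)
    (hsum : dL + dH + dS = 0)
    (heq1 : uLL * dL = M + re * aHH * dH)
    (heq2 : uLL * dL = N + E * dS) :
    0 < dS ∧ dL < 0 := by
  have hpos : 0 < re * (-aHH) := mul_pos hre (neg_pos.mpr haHH)
  have hS : 0 < dS := by
    by_contra h
    push_neg at h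
    have h1 : 0 < N + E * dS := by nlinarith
    have hdL : dL < 0 := by nlinarith
    have hdH : 0 < dH := by nlinarith
    nlinarith [mul_pos hpos hdH]
  refine ⟨hS, ?_⟩
  by_contra h
  push_neg at h
  have h1 : uLL * dL ≤ 0 := mul_nonpos_of_nonpos_of_nonneg huLL.le h
  have hdH : 0 < dH := by nlinarith
  nlinarith
end

section
/- Let uLL, aHH, re, N, E, dL, dH, dS be real numbers satisfying uLL < 0, aHH < 0, re > 0, N > 0, E < 0, dL + dH + dS = 0, uLL·dL = re·aHH·dH, and uLL·dL = N + E·dS. Then dS > 0, dH < 0, and dL < 0. -/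
/-- Proposition 4 (extroversion case): more extroverted students socialize strictly more,
study strictly less, and take strictly less leisure. -/
theorem stmt_7 (uLL aHH re N E dL dH dS : ℝ)
    (huLL : uLL < 0) (haHH : aHH < 0) (hre : 0 < re)
    (hN : 0 < N) (hE : E < 0)
    (hsum : dL + dH + dS = 0)
    (heq1 : uLL * dL = re * aHH * dH)
    (heq2 : uLL * dL = N + E * dS) :
    0 < dS ∧ dH < 0 ∧ dL < 0 := by
  have hra : re * aHH < 0 := mul_neg_of_pos_of_neg hre haHH
  have hdS : 0 < dS := by
    by_contra h
    push_neg at h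
    have hES : 0 ≤ E * dS := by nlinarith
    have h1 : 0 < uLL * dL := by nlinarith
    have hdL : dL < 0 := by nlinarith [mul_nonneg (le_of_lt (neg_pos.mpr huLL)) (neg_nonneg.mpr (le_of_not_gt (fun hc => absurd h1 (not_lt.mpr (mul_nonpos_of_nonpos_of_nonneg (le_of_lt huLL) (le_of_lt hc))))))]
    have hdH : dH < 0 := by nlinarith
    linarith
  have hdH : dH < 0 := by
    by_contra h
    push_neg at h
    have hdL : 0 ≤ dL := by nlinarith
    linarith
  have hdL : dL < 0 := by nlinarith
  exact ⟨hdS, hdH, hdL⟩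
end
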